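/- arXiv:2510.13650 — 2 statements merged into one kernel-verified Lean document; each statement's English description precedes it below -/
import Mathlib

section
/- Let Ω ⊆ ℝⁿ, f ∈ C¹(Ω, ℝⁿ), C > 0, V ∈ C¹(Ω, ℝ) and φ ∈ C¹(Ω, ℝ^m) satisfy C|φ(x)|² − |Dφ(x)·f(x)|² + ∇V(x)·f(x) ≥ 0 for all x ∈ Ω. Then for any solution x(t) of x' = f(x) with x(t+T) = x(t) for some T > 0 and ∫₀^T φ(x(t)) dt = 0, either φ(x(t)) = 0 for all t, or T ≥ 2π/√C. -/
/-!
Along the orbit the term `DV(x)·f(x)` is the derivative of `V ∘ x`, whose integral over a period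
vanishes; integrating the hypothesis therefore gives `∫ |(φ ∘ x)'|² ≤ C ∫ |φ ∘ x|²`. Wirtinger's
inequality, which follows from Parseval's identity because the `n`-th Fourier coefficient of
`(φ ∘ x)'` is `2πin/T` times that of `φ ∘ x`, gives `(2π/T)² ∫ |φ ∘ x|² ≤ ∫ |(φ ∘ x)'|²`. So either
`∫ |φ ∘ x|² = 0`, and then `φ ∘ x ≡ 0` by continuity, or `(2π/T)² ≤ C`.
-/

open scoped Real
open MeasureTheory Set Complex

theorem ContinuousOn.memLp_restrict_Ioc {E : Type*} [NormedAddCommGroup E] {f : ℝ → E} {a b : ℝ}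
    (hf : ContinuousOn f (Icc a b)) (p : ENNReal) : MemLp f p (volume.restrict (Ioc a b)) := by
  obtain ⟨C, hC⟩ := isCompact_Icc.exists_bound_of_continuousOn hf
  exact .of_bound ((hf.mono Ioc_subset_Icc_self).aestronglyMeasurable measurableSet_Ioc) C
    (ae_restrict_of_forall_mem measurableSet_Ioc fun t ht => hC t (Ioc_subset_Icc_self ht))

theorem fourierCoeffOn_zero_of_intervalIntegral_eq_zero {E : Type*} [NormedAddCommGroup E]
    [NormedSpace ℂ E] {a b : ℝ} (hab : a < b) {g : ℝ → E} (h : ∫ t in a..b, g t = 0) :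
    fourierCoeffOn hab g 0 = 0 := by
  simp [fourierCoeffOn_eq_integral, h]

theorem fourierCoeffOn_of_hasDerivAt_of_eq {a b : ℝ} (hab : a < b) {g g' : ℝ → ℂ}
    (hg : ∀ t ∈ Icc a b, HasDerivAt g (g' t) t) (hg' : IntervalIntegrable g' volume a b)
    (hgab : g a = g b) {n : ℤ} (hn : n ≠ 0) :
    fourierCoeffOn hab g' n = 2 * π * I * n / (b - a) * fourierCoeffOn hab g n := by
  have h := fourierCoeffOn_of_hasDerivAt hab hn (by rwa [uIcc_of_lt hab]) hg'
  rw [hgab, sub_self, mul_zero, zero_sub] at h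
  rw [h]
  have : (b - a : ℂ) ≠ 0 := by exact_mod_cast (sub_pos.2 hab).ne'
  field_simp [Complex.ofReal_ne_zero.2 Real.pi_ne_zero, Complex.I_ne_zero,
    (Int.cast_ne_zero.2 hn : (n : ℂ) ≠ 0)]

theorem wirtinger_inequality {a b : ℝ} (hab : a < b) {g g' : ℝ → ℂ}
    (hg : ∀ t ∈ Icc a b, HasDerivAt g (g' t) t) (hg' : MemLp g' 2 (volume.restrict (Ioc a b)))
    (hgab : g a = g b) (hmean : ∫ t in a..b, g t = 0) :
    (2 * π / (b - a)) ^ 2 * ∫ t in a..b, ‖g t‖ ^ 2 ≤ ∫ t in a..b, ‖g' t‖ ^ 2 := by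
  have hba : 0 < b - a := sub_pos.2 hab
  have hgL2 : MemLp g 2 (volume.restrict (Ioc a b)) :=
    ContinuousOn.memLp_restrict_Ioc (fun t ht => (hg t ht).continuousAt.continuousWithinAt) 2
  have hg'int : IntervalIntegrable g' volume a b :=
    (intervalIntegrable_iff_integrableOn_Ioc_of_le hab.le).2 (hg'.integrable one_le_two)
  have hcoeff (n : ℤ) : (2 * π / (b - a)) ^ 2 * ‖fourierCoeffOn hab g n‖ ^ 2
      ≤ ‖fourierCoeffOn hab g' n‖ ^ 2 := by
    rcases eq_or_ne n 0 with rfl | hn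
    · simp [fourierCoeffOn_zero_of_intervalIntegral_eq_zero hab hmean]
    have hn1 : (1 : ℝ) ≤ |(n : ℝ)| := by exact_mod_cast Int.one_le_abs hn
    rw [fourierCoeffOn_of_hasDerivAt_of_eq hab hg hg'int hgab hn, norm_mul, mul_pow]
    gcongr
    simp only [← ofReal_sub, norm_div, norm_mul, norm_I, norm_ofNat, norm_real, norm_intCast,
      Real.norm_eq_abs, abs_of_pos Real.pi_pos, abs_of_pos hba, mul_one]
    gcongr ?_ / _
    exact le_mul_of_one_le_right (by positivity) hn1
  have h := hasSum_le hcoeff ((hasSum_sq_fourierCoeffOn hab hgL2).mul_left _)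
    (hasSum_sq_fourierCoeffOn hab hg')
  rw [smul_eq_mul, smul_eq_mul, mul_left_comm] at h
  exact le_of_mul_le_mul_left h (inv_pos.2 hba)

theorem wirtinger_inequality_euclidean {ι : Type*} [Fintype ι] {a b : ℝ} (hab : a < b)
    {G G' : ℝ → EuclideanSpace ℝ ι}
    (hG : ∀ t ∈ Icc a b, HasDerivAt G (G' t) t) (hG' : MemLp G' 2 (volume.restrict (Ioc a b)))
    (hGab : G a = G b) (hmean : ∫ t in a..b, G t = 0) :
    (2 * π / (b - a)) ^ 2 * ∫ t in a..b, ‖G t‖ ^ 2 ≤ ∫ t in a..b, ‖G' t‖ ^ 2 := by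
  let L (i : ι) : EuclideanSpace ℝ ι →L[ℝ] ℂ := ofRealCLM.comp (EuclideanSpace.proj i)
  have hGc : ContinuousOn G (Icc a b) := fun t ht => (hG t ht).continuousAt.continuousWithinAt
  have hcoord (i : ι) := wirtinger_inequality hab (g := fun t => L i (G t))
    (fun t ht => (L i).hasFDerivAt.comp_hasDerivAt t (hG t ht)) ((L i).comp_memLp' hG')
    (by simp only [hGab])
    (by rw [(L i).intervalIntegral_comp_comm (hGc.intervalIntegrable_of_Icc hab.le), hmean,
      map_zero])
  have hnorm_sq (H : ℝ → EuclideanSpace ℝ ι) (hH : MemLp H 2 (volume.restrict (Ioc a b))) :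
      ∫ t in a..b, ‖H t‖ ^ 2 = ∑ i, ∫ t in a..b, ‖L i (H t)‖ ^ 2 := by
    rw [← intervalIntegral.integral_finsetSum fun i _ => ?_]
    · simp [L, EuclideanSpace.norm_sq_eq, norm_real]
    · rw [intervalIntegrable_iff_integrableOn_Ioc_of_le hab.le]
      exact (memLp_two_iff_integrable_sq_norm ((L i).comp_memLp' hH).1).1 ((L i).comp_memLp' hH)
  rw [hnorm_sq G (hGc.memLp_restrict_Ioc 2), hnorm_sq G' hG', Finset.mul_sum]
  exact Finset.sum_le_sum fun i _ => hcoord i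

theorem intervalIntegral.integral_le_integral_of_le_add_deriv {a b : ℝ} (hab : a ≤ b)
    {p q w w' : ℝ → ℝ} (hp : IntervalIntegrable p volume a b)
    (hq : IntervalIntegrable q volume a b) (hw' : IntervalIntegrable w' volume a b)
    (hw : ∀ t ∈ uIcc a b, HasDerivAt w (w' t) t) (hwab : w a = w b)
    (hle : ∀ t ∈ Icc a b, q t ≤ p t + w' t) :
    ∫ t in a..b, q t ≤ ∫ t in a..b, p t := by
  calc ∫ t in a..b, q t ≤ ∫ t in a..b, (p t + w' t) := integral_mono_on hab hq (hp.add hw') hle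
    _ = ∫ t in a..b, p t := by
      rw [integral_add hp hw', integral_eq_sub_of_hasDerivAt hw hw', hwab, sub_self, add_zero]

theorem Function.Periodic.eq_zero_of_intervalIntegral_eq_zero {f : ℝ → ℝ} {T : ℝ}
    (hper : Function.Periodic f T) (hT : 0 < T) (hf : Continuous f) (hf0 : 0 ≤ f)
    (hint : ∫ t in 0..T, f t = 0) : f = 0 := by
  by_contra hne
  obtain ⟨t, ht⟩ := Function.ne_iff.1 hne
  obtain ⟨s, hs, hts⟩ := hper.exists_mem_Ico₀ hT t
  refine (intervalIntegral.integral_pos hT hf.continuousOn (fun u _ => hf0 u)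
    ⟨s, Ico_subset_Icc_self hs, ?_⟩).ne' hint
  exact (hf0 s).lt_of_ne (hts ▸ ht).symm

noncomputable def lieDeriv {E F : Type*} [NormedAddCommGroup E] [NormedSpace ℝ E]
    [NormedAddCommGroup F] [NormedSpace ℝ F] (ψ : E → F) (f : E → E) (y : E) : F :=
  fderiv ℝ ψ y (f y)

section Solution

variable {E F : Type*} [NormedAddCommGroup E] [NormedSpace ℝ E] [NormedAddCommGroup F]
  [NormedSpace ℝ F] {Ω : Set E} {f : E → E} {ψ : E → F} {x : ℝ → E}

theorem hasDerivAt_comp_lieDeriv (hΩ : IsOpen Ω) (hψ : ContDiffOn ℝ 1 ψ Ω) {t : ℝ}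
    (hxΩ : x t ∈ Ω) (hsol : HasDerivAt x (f (x t)) t) :
    HasDerivAt (fun s => ψ (x s)) (lieDeriv ψ f (x t)) t :=
  ((hψ.differentiableOn one_ne_zero).differentiableAt (hΩ.mem_nhds hxΩ)).hasFDerivAt.comp_hasDerivAt
    t hsol

theorem continuous_lieDeriv_comp (hΩ : IsOpen Ω) (hf : ContinuousOn f Ω)
    (hψ : ContDiffOn ℝ 1 ψ Ω) (hx : Continuous x) (hxΩ : ∀ t, x t ∈ Ω) :
    Continuous fun t => lieDeriv ψ f (x t) :=
  ((hψ.continuousOn_fderiv_of_isOpen hΩ le_rfl).comp_continuous hx hxΩ).clm_apply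
    (hf.comp_continuous hx hxΩ)

end Solution

theorem two_pi_div_sqrt_le {C T : ℝ} (hT : 0 < T) (h : (2 * π / T) ^ 2 ≤ C) :
    2 * π / √C ≤ T := by
  have hle : 2 * π / T ≤ √C := (Real.le_sqrt' (by positivity)).2 h
  exact (div_le_comm₀ hT (lt_of_lt_of_le (by positivity) hle)).1 hle

theorem period_lower_bound_general {n m : ℕ} (Ω : Set (EuclideanSpace ℝ (Fin n))) (hΩ : IsOpen Ω)
    (f : EuclideanSpace ℝ (Fin n) → EuclideanSpace ℝ (Fin n))
    (hf : ContDiffOn ℝ 1 f Ω)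
    (C : ℝ)
    (V : EuclideanSpace ℝ (Fin n) → ℝ) (hV : ContDiffOn ℝ 1 V Ω)
    (φ : EuclideanSpace ℝ (Fin n) → EuclideanSpace ℝ (Fin m)) (hφ : ContDiffOn ℝ 1 φ Ω)
    (hineq : ∀ x ∈ Ω,
      C * ‖φ x‖ ^ 2 - ‖fderiv ℝ φ x (f x)‖ ^ 2 + fderiv ℝ V x (f x) ≥ 0)
    (x : ℝ → EuclideanSpace ℝ (Fin n)) (hxΩ : ∀ t, x t ∈ Ω)
    (hsol : ∀ t, HasDerivAt x (f (x t)) t)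
    (T : ℝ) (hT : 0 < T) (hper : ∀ t, x (t + T) = x t)
    (hmean : (∫ t in (0:ℝ)..T, φ (x t)) = 0) :
    (∀ t, φ (x t) = 0) ∨ 2 * π / Real.sqrt C ≤ T := by
  have hx : Continuous x := continuous_iff_continuousAt.2 fun t => (hsol t).continuousAt
  have hxT : x 0 = x T := by simpa using (hper 0).symm
  have hφx : Continuous fun t => φ (x t) := hφ.continuousOn.comp_continuous hx hxΩ
  have hφx' := continuous_lieDeriv_comp hΩ hf.continuousOn hφ hx hxΩ
  have hVx' := continuous_lieDeriv_comp hΩ hf.continuousOn hV hx hxΩ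
  have hlyapunov : ∫ t in 0..T, ‖lieDeriv φ f (x t)‖ ^ 2 ≤ ∫ t in 0..T, C * ‖φ (x t)‖ ^ 2 :=
    intervalIntegral.integral_le_integral_of_le_add_deriv hT.le
      ((continuous_const.mul (hφx.norm.pow 2)).intervalIntegrable _ _)
      ((hφx'.norm.pow 2).intervalIntegrable _ _) (hVx'.intervalIntegrable _ _)
      (fun t _ => hasDerivAt_comp_lieDeriv hΩ hV (hxΩ t) (hsol t)) (by rw [hxT])
      (fun t _ => by rw [lieDeriv, lieDeriv]; linarith [hineq (x t) (hxΩ t)])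
  have hwirtinger := wirtinger_inequality_euclidean hT
    (fun t _ => hasDerivAt_comp_lieDeriv hΩ hφ (hxΩ t) (hsol t))
    (hφx'.continuousOn.memLp_restrict_Ioc 2) (by rw [hxT]) hmean
  rw [intervalIntegral.integral_const_mul] at hlyapunov
  rw [sub_zero] at hwirtinger
  rcases (intervalIntegral.integral_nonneg hT.le fun t _ => sq_nonneg ‖φ (x t)‖).eq_or_lt with
    hzero | hpos
  · left
    have hvanish := Function.Periodic.eq_zero_of_intervalIntegral_eq_zero
      (f := fun t => ‖φ (x t)‖ ^ 2) (fun t => by simp only [hper t]) hT (hφx.norm.pow 2)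
      (fun t => sq_nonneg _) hzero.symm
    simpa using congrFun hvanish
  · exact Or.inr (two_pi_div_sqrt_le hT (le_of_mul_le_mul_right (hwirtinger.trans hlyapunov) hpos))

/-- Main proposition: a Lyapunov-like criterion giving a lower bound on periods.
If `C|φ(x)|² − |Dφ(x)·f(x)|² + DV(x)·f(x) ≥ 0` on `Ω`, then any periodic solution of
`x' = f(x)` with period `T > 0` lying in `Ω` along which `φ` has zero mean satisfies:
either `φ` vanishes identically along the orbit, or `T ≥ 2π/√C`. -/
theorem period_lower_bound {n m : ℕ} (Ω : Set (EuclideanSpace ℝ (Fin n))) (hΩ : IsOpen Ω)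
    (f : EuclideanSpace ℝ (Fin n) → EuclideanSpace ℝ (Fin n))
    (hf : ContDiffOn ℝ 1 f Ω)
    (C : ℝ) (hC : 0 < C)
    (V : EuclideanSpace ℝ (Fin n) → ℝ) (hV : ContDiffOn ℝ 1 V Ω)
    (φ : EuclideanSpace ℝ (Fin n) → EuclideanSpace ℝ (Fin m)) (hφ : ContDiffOn ℝ 1 φ Ω)
    (hineq : ∀ x ∈ Ω,
      C * ‖φ x‖ ^ 2 - ‖fderiv ℝ φ x (f x)‖ ^ 2 + fderiv ℝ V x (f x) ≥ 0)
    (x : ℝ → EuclideanSpace ℝ (Fin n)) (hxΩ : ∀ t, x t ∈ Ω)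
    (hsol : ∀ t, HasDerivAt x (f (x t)) t)
    (T : ℝ) (hT : 0 < T) (hper : ∀ t, x (t + T) = x t)
    (hmean : (∫ t in (0:ℝ)..T, φ (x t)) = 0) :
    (∀ t, φ (x t) = 0) ∨ 2 * π / Real.sqrt C ≤ T :=
  period_lower_bound_general Ω hΩ f hf C V hV φ hφ hineq x hxΩ hsol T hT hper hmean
end

section
/- In the Lorenz system with σ > 0, ρ > 2, β > 0, every non-constant periodic solution x(t) that is invariant under the symmetry (x₁,x₂,x₃) ↦ (−x₁,−x₂,x₃) has period T ≥ 2π/(σ√(ρ−1)). -/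
open scoped Real Topology
open Filter Set Real intervalIntegral

/-!
The half-period shift flips the sign of `x₁`, so `x₁` vanishes at some `a` and again at
`a + T/2` (and `x₁ ≢ 0`: otherwise `x₂ ≡ 0` and `x₃` decays exponentially, which a periodic
function cannot do unless it is `0`). The function
`V = ½(σ(ρ−2)x₁² − σ²x₂² − σ²x₃²)` takes the same value at `a` and `a + T/2`, and along the flow
`σ²(ρ−1)x₁² − x₁'² + V' = σ²βx₃² ≥ 0`, so integrating over `[a, a + T/2]` gives
`∫ x₁'² ≤ σ²(ρ−1) ∫ x₁²`. Wirtinger's inequality `(π/(b−a))² ∫ f² ≤ ∫ f'²` for `f` vanishing at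
`a` and `b` then forces `(2π/T)² ≤ σ²(ρ−1)`.

Wirtinger's inequality is Picone's trick: with `k = π/(b−a)`, the function `k cot(k(t−a)) f²`
has derivative `f'² − k²f² − (f' − k cot(k(t−a)) f)²` on `(a, b)` and vanishes at both ends.
-/

theorem continuousAt_mul_cos_div_sin_mul_sq {f : ℝ → ℝ} {d a k : ℝ} (hk : k ≠ 0)
    (hf : HasDerivAt f d a) (ha : f a = 0) :
    ContinuousAt (fun t => k * cos (k * (t - a)) / sin (k * (t - a)) * f t ^ 2) a := by
  have hcot : Tendsto (fun t => cos (k * (t - a)) / sinc (k * (t - a))) (𝓝[≠] a) (𝓝 1) := by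
    have : ContinuousAt (fun t => cos (k * (t - a)) / sinc (k * (t - a))) a :=
      ContinuousAt.div (by fun_prop) (by fun_prop) (by simp)
    simpa using this.tendsto.mono_left nhdsWithin_le_nhds
  have hf0 : Tendsto f (𝓝[≠] a) (𝓝 0) :=
    ha ▸ hf.continuousAt.tendsto.mono_left nhdsWithin_le_nhds
  have hlim := (hcot.mul (hasDerivAt_iff_tendsto_slope.mp hf)).mul hf0
  rw [mul_zero] at hlim
  rw [← continuousWithinAt_compl_self, ContinuousWithinAt]
  simp only [sub_self, mul_zero, sin_zero, div_zero, zero_mul]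
  refine hlim.congr' ?_
  filter_upwards [self_mem_nhdsWithin] with t ht
  have hs : k * (t - a) ≠ 0 := mul_ne_zero hk (sub_ne_zero.mpr ht)
  rw [sinc_of_ne_zero hs, slope_def_field, ha, div_div_eq_mul_div]
  by_cases hs0 : sin (k * (t - a)) = 0
  · simp [hs0]
  field_simp [sub_ne_zero.mpr ht]
  ring

theorem hasDerivAt_mul_cos_div_sin_mul_sq {f : ℝ → ℝ} {d a k t : ℝ} (hf : HasDerivAt f d t)
    (hs : sin (k * (t - a)) ≠ 0) :
    HasDerivAt (fun u => k * cos (k * (u - a)) / sin (k * (u - a)) * f u ^ 2)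
      (d ^ 2 - k ^ 2 * f t ^ 2 - (d - k * cos (k * (t - a)) / sin (k * (t - a)) * f t) ^ 2) t := by
  have hlin : HasDerivAt (fun u => k * (u - a)) k t := by
    simpa using ((hasDerivAt_id t).sub_const a).const_mul k
  have hcos := ((hasDerivAt_cos _).comp t hlin).const_mul k
  have hsin := (hasDerivAt_sin _).comp t hlin
  refine ((hcos.fun_div hsin hs).fun_mul (hf.fun_pow 2)).congr_deriv ?_
  simp only [Function.comp_apply]
  field_simp
  ring

theorem wirtinger_inequality_dirichlet {f f' : ℝ → ℝ} {a b : ℝ} (hab : a < b)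
    (hf : ∀ t, HasDerivAt f (f' t) t) (hf' : Continuous f') (ha : f a = 0) (hb : f b = 0) :
    (π / (b - a)) ^ 2 * ∫ t in a..b, f t ^ 2 ≤ ∫ t in a..b, f' t ^ 2 := by
  have hfc : Continuous f := continuous_iff_continuousAt.mpr fun t => (hf t).continuousAt
  set k := π / (b - a)
  have hk : 0 < k := div_pos pi_pos (sub_pos.mpr hab)
  have hkb : k * (b - a) = π := div_mul_cancel₀ _ (sub_pos.mpr hab).ne'
  -- At `a` and `b` the sine vanishes, so `G` is `0` there by the convention `x / 0 = 0`; this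
  -- agrees with its limits because `f` vanishes to first order.
  set G := fun t => k * cos (k * (t - a)) / sin (k * (t - a)) * f t ^ 2
  have hsin : ∀ t ∈ Ioo a b, sin (k * (t - a)) ≠ 0 := fun t ht =>
    (sin_pos_of_pos_of_lt_pi (mul_pos hk (sub_pos.mpr ht.1))
      (hkb ▸ mul_lt_mul_of_pos_left (by linarith [ht.2]) hk)).ne'
  -- Shifting by half a period of `cot` recentres the singularity of `G` at `b`.
  have hGb : G = fun t => k * cos (k * (t - b)) / sin (k * (t - b)) * f t ^ 2 := by
    ext t
    have : k * (t - a) = k * (t - b) + π := by rw [← hkb]; ring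
    simp only [G, this, cos_add_pi, sin_add_pi, mul_neg, neg_div_neg_eq]
  have hGcont : ContinuousOn G (Icc a b) := by
    intro t ht
    refine ContinuousAt.continuousWithinAt ?_
    rcases ht.1.eq_or_lt with rfl | hat
    · exact continuousAt_mul_cos_div_sin_mul_sq hk.ne' (hf a) ha
    rcases ht.2.eq_or_lt with rfl | htb
    · rw [hGb]; exact continuousAt_mul_cos_div_sin_mul_sq hk.ne' (hf t) hb
    · exact (hasDerivAt_mul_cos_div_sin_mul_sq (hf t) (hsin t ⟨hat, htb⟩)).continuousAt
  have h := sub_le_integral_of_hasDeriv_right_of_le (φ := fun t => f' t ^ 2 - k ^ 2 * f t ^ 2)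
    hab.le hGcont
    (fun t ht => (hasDerivAt_mul_cos_div_sin_mul_sq (hf t) (hsin t ht)).hasDerivWithinAt)
    ((by fun_prop : Continuous fun t => f' t ^ 2 - k ^ 2 * f t ^ 2).integrableOn_Icc)
    (fun t _ => sub_le_self _ (sq_nonneg _))
  rw [integral_sub ((by fun_prop : Continuous fun t => f' t ^ 2).intervalIntegrable a b)
    ((by fun_prop : Continuous fun t => k ^ 2 * f t ^ 2).intervalIntegrable a b),
    integral_const_mul] at h
  simp only [G, ha, hb, sub_self, mul_zero, sin_zero, div_zero, zero_pow two_ne_zero] at h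
  linarith

theorem sq_pi_div_le_of_lyapunov {φ φ' V V' : ℝ → ℝ} {C a b : ℝ} (hab : a < b)
    (hφ : ∀ t, HasDerivAt φ (φ' t) t) (hφ' : Continuous φ') (ha : φ a = 0) (hb : φ b = 0)
    (hne : ∃ t ∈ Icc a b, φ t ≠ 0) (hV : ∀ t, HasDerivAt V (V' t) t) (hVab : V a = V b)
    (hlyap : ∀ t ∈ Ioo a b, 0 ≤ C * φ t ^ 2 - φ' t ^ 2 + V' t) :
    (π / (b - a)) ^ 2 ≤ C := by
  have hφc : Continuous φ := continuous_iff_continuousAt.mpr fun t => (hφ t).continuousAt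
  have hVc : Continuous V := continuous_iff_continuousAt.mpr fun t => (hV t).continuousAt
  have hpos : 0 < ∫ t in a..b, φ t ^ 2 :=
    integral_pos hab (by fun_prop) (fun t _ => sq_nonneg _)
      (hne.imp fun t ⟨ht, h⟩ => ⟨ht, by positivity⟩)
  have hdecay := integral_le_sub_of_hasDeriv_right_of_le (φ := fun t => φ' t ^ 2 - C * φ t ^ 2)
    hab.le hVc.continuousOn (fun t _ => (hV t).hasDerivWithinAt)
    ((by fun_prop : Continuous fun t => φ' t ^ 2 - C * φ t ^ 2).integrableOn_Icc)
    (fun t ht => by linarith [hlyap t ht])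
  rw [integral_sub ((by fun_prop : Continuous fun t => φ' t ^ 2).intervalIntegrable a b)
    ((by fun_prop : Continuous fun t => C * φ t ^ 2).intervalIntegrable a b),
    integral_const_mul, hVab, sub_self, sub_nonpos] at hdecay
  exact le_of_mul_le_mul_right
    ((wirtinger_inequality_dirichlet hab hφ hφ' ha hb).trans hdecay) hpos

theorem Function.Antiperiodic.exists_eq_zero {f : ℝ → ℝ} {c : ℝ} (hf : Continuous f)
    (h : Antiperiodic f c) : ∃ t, f t = 0 := by
  have h0 : (0 : ℝ) ∈ uIcc (f 0) (f c) := by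
    rw [h.eq, mem_uIcc]
    rcases le_total (f 0) 0 with h0 | h0
    · exact Or.inl ⟨h0, by linarith⟩
    · exact Or.inr ⟨by linarith, h0⟩
  obtain ⟨t, -, ht⟩ := intermediate_value_uIcc hf.continuousOn h0
  exact ⟨t, ht⟩

theorem Function.Antiperiodic.exists_mem_Icc_ne_zero {f : ℝ → ℝ} {c : ℝ}
    (h : Antiperiodic f c) (hc : 0 < c) {s : ℝ} (hs : f s ≠ 0) (a : ℝ) :
    ∃ t ∈ Icc a (a + c), f t ≠ 0 := by
  obtain ⟨t, ht, hst⟩ := (h.mul h).exists_mem_Ico hc s a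
  refine ⟨t, Ico_subset_Icc_self ht, fun h0 => hs ?_⟩
  simpa [h0] using hst

theorem Function.Periodic.eq_zero_of_hasDerivAt_const_mul {y : ℝ → ℝ} {c p : ℝ}
    (hy : ∀ t, HasDerivAt y (c * y t) t) (hc : c ≠ 0) (hp : Periodic y p) (hp0 : p ≠ 0) :
    y = 0 := by
  have hw : ∀ t, HasDerivAt (fun u => y u * exp (-c * u)) 0 t := fun t => by
    have he : HasDerivAt (fun u => exp (-c * u)) (exp (-c * t) * (-c * 1)) t :=
      ((hasDerivAt_id' t).const_mul (-c)).exp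
    refine ((hy t).mul he).congr_deriv ?_
    ring
  have hconst (t : ℝ) : y t * exp (-c * t) = y 0 := by
    simpa using is_const_of_deriv_eq_zero (fun u => (hw u).differentiableAt)
      (fun u => (hw u).deriv) t 0
  have hy0 : y 0 = 0 := by
    have hexp : exp (-c * p) ≠ 1 := by
      rw [Ne, exp_eq_one_iff]; exact mul_ne_zero (neg_ne_zero.mpr hc) hp0
    have := hconst p
    rw [show y p = y 0 by simpa using hp 0] at this
    have hmul : y 0 * (exp (-c * p) - 1) = 0 := by rw [mul_sub, this, mul_one, sub_self]
    exact (mul_eq_zero.mp hmul).resolve_right (sub_ne_zero.mpr hexp)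
  ext t
  simpa [hy0, exp_ne_zero] using hconst t

def IsLorenzSolution (σ ρ β : ℝ) (x₁ x₂ x₃ : ℝ → ℝ) : Prop :=
  ∀ t, HasDerivAt x₁ (σ * (x₂ t - x₁ t)) t ∧
    HasDerivAt x₂ (x₁ t * (ρ - x₃ t) - x₂ t) t ∧
    HasDerivAt x₃ (x₁ t * x₂ t - β * x₃ t) t

noncomputable def lorenzLyapunov (σ ρ x₁ x₂ x₃ : ℝ) : ℝ :=
  (σ * (ρ - 2) * x₁ ^ 2 - σ ^ 2 * x₂ ^ 2 - σ ^ 2 * x₃ ^ 2) / 2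

namespace IsLorenzSolution

variable {σ ρ β : ℝ} {x₁ x₂ x₃ : ℝ → ℝ}

theorem continuous (h : IsLorenzSolution σ ρ β x₁ x₂ x₃) :
    Continuous x₁ ∧ Continuous x₂ ∧ Continuous x₃ := by
  simp only [continuous_iff_continuousAt]
  exact ⟨fun t => (h t).1.continuousAt, fun t => (h t).2.1.continuousAt,
    fun t => (h t).2.2.continuousAt⟩

theorem hasDerivAt_lorenzLyapunov (h : IsLorenzSolution σ ρ β x₁ x₂ x₃) (t : ℝ) :
    HasDerivAt (fun t => lorenzLyapunov σ ρ (x₁ t) (x₂ t) (x₃ t))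
      (σ ^ 2 * (x₂ t - x₁ t) ^ 2 - σ ^ 2 * (ρ - 1) * x₁ t ^ 2 + σ ^ 2 * β * x₃ t ^ 2) t := by
  obtain ⟨h₁, h₂, h₃⟩ := h t
  refine ((((h₁.fun_pow 2).const_mul _).fun_sub ((h₂.fun_pow 2).const_mul _)).fun_sub
    ((h₃.fun_pow 2).const_mul _)).div_const 2 |>.congr_deriv ?_
  ring

theorem eq_zero_of_x₁_eq_zero (h : IsLorenzSolution σ ρ β x₁ x₂ x₃) (hσ : σ ≠ 0)
    (hβ : β ≠ 0) {p : ℝ} (hp : p ≠ 0) (hx₃ : Function.Periodic x₃ p) (hx₁ : x₁ = 0) :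
    x₂ = 0 ∧ x₃ = 0 := by
  subst hx₁
  have hx₂ : x₂ = 0 := funext fun t => by
    have := (h t).1.unique (hasDerivAt_const t 0)
    simpa [hσ] using this
  subst hx₂
  refine ⟨rfl, hx₃.eq_zero_of_hasDerivAt_const_mul (c := -β) (fun t => ?_)
    (neg_ne_zero.mpr hβ) hp⟩
  simpa using (h t).2.2

end IsLorenzSolution

theorem lorenz_symmetric_period_bound_general
    (σ ρ β : ℝ) (hσ : 0 < σ) (hρ : 2 < ρ) (hβ : 0 < β)
    (x₁ x₂ x₃ : ℝ → ℝ)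
    (hsol : ∀ t, HasDerivAt x₁ (σ * (x₂ t - x₁ t)) t ∧
                 HasDerivAt x₂ (x₁ t * (ρ - x₃ t) - x₂ t) t ∧
                 HasDerivAt x₃ (x₁ t * x₂ t - β * x₃ t) t)
    (T : ℝ) (hT : 0 < T)
    (hsym : ∀ t, x₁ (t + T / 2) = -x₁ t ∧ x₂ (t + T / 2) = -x₂ t ∧ x₃ (t + T / 2) = x₃ t)
    (hnonconst : ∃ t s, (x₁ t, x₂ t, x₃ t) ≠ (x₁ s, x₂ s, x₃ s)) :
    2 * π / (σ * Real.sqrt (ρ - 1)) ≤ T := by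
  have hL : IsLorenzSolution σ ρ β x₁ x₂ x₃ := hsol
  have hanti : Function.Antiperiodic x₁ (T / 2) := fun t => (hsym t).1
  obtain ⟨s, hs⟩ : ∃ s, x₁ s ≠ 0 := by
    by_contra! h
    obtain ⟨rfl, rfl⟩ := hL.eq_zero_of_x₁_eq_zero hσ.ne' hβ.ne' (half_pos hT).ne'
      (fun t => (hsym t).2.2) (funext h)
    obtain ⟨t, s, hne⟩ := hnonconst
    simp [h] at hne
  obtain ⟨hc₁, hc₂, -⟩ := hL.continuous
  obtain ⟨a, ha⟩ := hanti.exists_eq_zero hc₁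
  have hbound := sq_pi_div_le_of_lyapunov (C := σ ^ 2 * (ρ - 1))
    (lt_add_of_pos_right a (half_pos hT)) (fun t => (hL t).1) (by fun_prop) ha
    (by rw [hanti, ha, neg_zero])
    (hanti.exists_mem_Icc_ne_zero (half_pos hT) hs a) hL.hasDerivAt_lorenzLyapunov
    (by simp only [lorenzLyapunov, (hsym a).1, (hsym a).2.1, (hsym a).2.2, neg_sq])
    (fun t _ => by linarith [show 0 ≤ σ ^ 2 * β * x₃ t ^ 2 by positivity])
  rw [add_sub_cancel_left] at hbound
  have hρ1 : 0 < ρ - 1 := by linarith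
  have hfreq : 2 * π / T ≤ σ * √(ρ - 1) := by
    rw [← sqrt_sq hσ.le, ← sqrt_mul (sq_nonneg σ), le_sqrt (by positivity) (by positivity)]
    convert hbound using 2
    field_simp
  rwa [div_le_comm₀ (mul_pos hσ (sqrt_pos.mpr hρ1)) hT]

/-- In the Lorenz system with `σ > 0`, `ρ > 2`, `β > 0`, every non-constant periodic
solution invariant under the symmetry `(x₁,x₂,x₃) ↦ (−x₁,−x₂,x₃)` (with time shift `T/2`)
has period `T ≥ 2π/(σ√(ρ−1))`. -/
theorem lorenz_symmetric_period_bound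
    (σ ρ β : ℝ) (hσ : 0 < σ) (hρ : 2 < ρ) (hβ : 0 < β)
    (x₁ x₂ x₃ : ℝ → ℝ)
    (hsol : ∀ t, HasDerivAt x₁ (σ * (x₂ t - x₁ t)) t ∧
                 HasDerivAt x₂ (x₁ t * (ρ - x₃ t) - x₂ t) t ∧
                 HasDerivAt x₃ (x₁ t * x₂ t - β * x₃ t) t)
    (T : ℝ) (hT : 0 < T)
    (hper : ∀ t, x₁ (t + T) = x₁ t ∧ x₂ (t + T) = x₂ t ∧ x₃ (t + T) = x₃ t)
    (hsym : ∀ t, x₁ (t + T / 2) = -x₁ t ∧ x₂ (t + T / 2) = -x₂ t ∧ x₃ (t + T / 2) = x₃ t)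
    (hnonconst : ∃ t s, (x₁ t, x₂ t, x₃ t) ≠ (x₁ s, x₂ s, x₃ s)) :
    2 * π / (σ * Real.sqrt (ρ - 1)) ≤ T :=
  lorenz_symmetric_period_bound_general σ ρ β hσ hρ hβ x₁ x₂ x₃ hsol T hT hsym hnonconst
end
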